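/- Let M be a nonempty set of paths in ℝ^d such that for every X : [0,T] → ℝ^d in M and every t ∈ [0,T], the left subpath X|_{[0,t]} also belongs to M. Then ℐ(M) is contained in T^{≥1}(ℝ^d) and ℐ(M) is a ≻-ideal: for every x ∈ ℐ(M) and every y ∈ T^{≥1}(ℝ^d), both x≻y ∈ ℐ(M) and y≻x ∈ ℐ(M). -/

import Mathlib

/-!
Write `φₜ x = ⟨σ(X)ₜ, x⟩` for the signature of a path `X` stopped at time `t`. Since `M` is closed
under left subpaths, every `x ∈ ℐ(M)` has `φₜ x = 0` for all `t ∈ (0, T]`, and by continuity also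
`x_e = φ₀ x = 0`. For a word `v = q b`, the recursive definition of iterated integrals and the
shuffle identity `⟨σ, u ⧢ w⟩ = ⟨σ, u⟩ ⟨σ, w⟩` give `φ_T (x ≻ v) = ∫₀ᵀ φₜ x ⟨σ(X)ₜ, q⟩ dX⁽ᵇ⁾ₜ = 0`.
Finally `y ≻ x = x ⧢ y - x ≻ y` on `T^{≥1}(ℝ^d)`, and `φ_T (x ⧢ y) = φ_T x · φ_T y = 0`.
-/

open scoped BigOperators TensorProduct

namespace PathVarieties

/-- Words over an alphabet `α`; the letters `{1,…,d}` of `ℝ^d` correspond to `α = Fin d`. -/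
abbrev Word (α : Type*) := List α

/-- The tensor algebra `T(ℝ^d)`, identified with the free real vector space on words. -/
abbrev TA (α : Type*) := Word α →₀ ℝ

/-- The list of all (riffle) shuffles of two words. -/
def shuffles {α : Type*} : Word α → Word α → List (Word α)
  | [], v => [v]
  | a :: u, [] => [a :: u]
  | a :: u, b :: v =>
      ((shuffles u (b :: v)).map (a :: ·)) ++ ((shuffles (a :: u) v).map (b :: ·))
termination_by u v => u.length + v.length
decreasing_by all_goals (simp only [List.length_cons]; omega)

/-- Shuffle product of two words, as an element of `T(ℝ^d)`. -/
noncomputable def shw {α : Type*} (u v : Word α) : TA α :=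
  ((shuffles u v).map fun w => Finsupp.single w (1 : ℝ)).sum

/-- The shuffle product `⧢` on `T(ℝ^d)`, the bilinear extension of the shuffle of words. -/
noncomputable def sh {α : Type*} (x y : TA α) : TA α :=
  x.sum fun u cu => y.sum fun v cv => (cu * cv) • shw u v

/-- Right halfshuffle `u ≻ v` of words (`v` nonempty): shuffle `u` with `v` minus its
last letter, then append the last letter of `v`.  (This is the unique bilinear operation
with `w ≻ a = wa` and `w ≻ (va) = (w≻v + v≻w)a`.) -/
noncomputable def rshw {α : Type*} (u v : Word α) : TA α :=
  ((shuffles u v.dropLast).map fun w =>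
    Finsupp.single (w ++ v.drop (v.length - 1)) (1 : ℝ)).sum

/-- Right halfshuffle `≻` on `T^{≥1}(ℝ^d)`, extended bilinearly. -/
noncomputable def rsh {α : Type*} (x y : TA α) : TA α :=
  x.sum fun u cu => y.sum fun v cv => (cu * cv) • rshw u v

/-- Left halfshuffle `u ≺ v` of words (`u` nonempty): the first letter of `u` followed by
the shuffle of the rest of `u` with `v`.  (This is the unique bilinear operation with
`a ≺ w = aw` and `(av) ≺ w = a(w≺v + v≺w)`.) -/
noncomputable def lshw {α : Type*} (u v : Word α) : TA α :=
  ((shuffles u.tail v).map fun w => Finsupp.single (u.take 1 ++ w) (1 : ℝ)).sum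

/-- Left halfshuffle `≺` on `T^{≥1}(ℝ^d)`, extended bilinearly. -/
noncomputable def lsh {α : Type*} (x y : TA α) : TA α :=
  x.sum fun u cu => y.sum fun v cv => (cu * cv) • lshw u v

/-- The antipode `𝒜`, with `𝒜(i₁⋯iₙ) = (−1)ⁿ iₙ⋯i₁`. -/
noncomputable def antipode {α : Type*} (x : TA α) : TA α :=
  x.sum fun w c => Finsupp.single w.reverse (((-1 : ℝ) ^ w.length) * c)

/-- Helper for `Λ_B`: value on a reversed word. -/
noncomputable def lamRev {α β : Type*} (B : α → TA β) : Word α → TA β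
  | [] => Finsupp.single [] 1
  | [i] => B i
  | i :: w => rsh (lamRev B w) (B i)

/-- `Λ_B` on a word: `Λ_B e = e`, `Λ_B i = B i`, `Λ_B (w·i) = (Λ_B w) ≻ (Λ_B i)`. -/
noncomputable def lamW {α β : Type*} (B : α → TA β) (w : Word α) : TA β :=
  lamRev B w.reverse

/-- The linear map `Λ_B : T(ℝ^t) → T(ℝ^d)` induced by `B` on letters. -/
noncomputable def Lam {α β : Type*} (B : α → TA β) (x : TA α) : TA β :=
  x.sum fun w c => c • lamW B w

/-- `splitEmb e j n w = Σ_{w = u₁⋯uₙ} e_j(u₁) ⧢ e_{j+1}(u₂) ⧢ ⋯ ⧢ e_{j+n−1}(uₙ)`,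
the sum over all splittings of `w` into `n` consecutive (possibly empty) factors,
each factor relabelled letterwise by `e`. -/
noncomputable def splitEmb {α β : Type*} (e : ℕ → α → β) : ℕ → ℕ → Word α → TA β
  | _, 0, w => if w.isEmpty then Finsupp.single ([] : Word β) (1 : ℝ) else 0
  | j, k + 1, w => ∑ m ∈ Finset.range (w.length + 1),
      sh (Finsupp.single ((w.take m).map (e j)) (1 : ℝ)) (splitEmb e (j + 1) k (w.drop m))

/-- `Σ_{x=uv} f(u)·v`: deconcatenate, evaluate the functional `f` on prefixes. -/
noncomputable def leftAct {α : Type*} (f : Word α → ℝ) (x : TA α) : TA α :=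
  x.sum fun w c => c • ∑ k ∈ Finset.range (w.length + 1),
    f (w.take k) • Finsupp.single (w.drop k) (1 : ℝ)

/-- `Σ_{x=uv} u·f(v)`: deconcatenate, evaluate the functional `f` on suffixes. -/
noncomputable def rightAct {α : Type*} (f : Word α → ℝ) (x : TA α) : TA α :=
  x.sum fun w c => c • ∑ k ∈ Finset.range (w.length + 1),
    f (w.drop k) • Finsupp.single (w.take k) (1 : ℝ)

/-- A raw path: a time horizon `T` together with a map `ℝ → ℝ^α`
(only the restriction to `[0,T]` is relevant). -/
structure RawPath (α : Type*) where
  T : ℝ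
  toFun : ℝ → α → ℝ

/-- A path: positive time horizon, continuous on `[0,T]` and piecewise continuously
differentiable there (witnessed by a partition `0 = τ₀ < τ₁ < ⋯ < τₙ = T`). -/
def IsPath {α : Type*} (X : RawPath α) : Prop :=
  0 < X.T ∧ (∀ i, ContinuousOn (fun t => X.toFun t i) (Set.Icc 0 X.T)) ∧
    ∃ (n : ℕ) (τ : Fin (n + 1) → ℝ), StrictMono τ ∧ τ 0 = 0 ∧ τ (Fin.last n) = X.T ∧
      ∀ (k : Fin n) (i : α), ContDiffOn ℝ 1 (fun t => X.toFun t i)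
        (Set.Icc (τ k.castSucc) (τ k.succ))

/-- Iterated integrals, by recursion on the reversed word:
`sigRev X (i :: w) t = ∫₀ᵗ ⟨σ(X)ₛ, w.reverse⟩ dX⁽ⁱ⁾(s)`. -/
noncomputable def sigRev {α : Type*} (X : ℝ → α → ℝ) : Word α → ℝ → ℝ
  | [], _ => 1
  | i :: w, t => ∫ s in (0 : ℝ)..t, sigRev X w s * deriv (fun u => X u i) s

/-- `⟨σ(X)_t, w⟩`, the iterated-integrals signature of `X` stopped at time `t`. -/
noncomputable def sigUpTo {α : Type*} (X : RawPath α) (t : ℝ) (w : Word α) : ℝ :=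
  sigRev X.toFun w.reverse t

/-- `⟨σ(X), w⟩`, the iterated-integrals signature of the path `X` at a word `w`. -/
noncomputable def sig {α : Type*} (X : RawPath α) (w : Word α) : ℝ :=
  sigUpTo X X.T w

/-- Pairing of a word-indexed functional with an element of `T(ℝ^d)`. -/
noncomputable def pairF {α : Type*} (f : Word α → ℝ) (x : TA α) : ℝ :=
  x.sum fun w c => c * f w

/-- `⟨σ(X), x⟩` for a tensor `x ∈ T(ℝ^d)` (linear in `x`). -/
noncomputable def pair {α : Type*} (X : RawPath α) (x : TA α) : ℝ :=
  Finsupp.linearCombination ℝ (sig X) x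

/-- The path variety `𝒱(W)` of all paths whose signature kills every element of `W`. -/
def V {α : Type*} (W : Set (TA α)) : Set (RawPath α) :=
  {X | IsPath X ∧ ∀ x ∈ W, pair X x = 0}

/-- `ℐ(M)`, the space of tensors killed by the signature of every path in `M`. -/
noncomputable def Idl {α : Type*} (M : Set (RawPath α)) : Submodule ℝ (TA α) :=
  ⨅ X ∈ M, LinearMap.ker (Finsupp.linearCombination ℝ (sig X))

/-- Concatenation `X ⊔ Y` of paths. -/
noncomputable def concat {α : Type*} (X Y : RawPath α) : RawPath α where
  T := X.T + Y.T
  toFun := fun t i =>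
    if t ≤ X.T then X.toFun t i else Y.toFun (t - X.T) i + X.toFun X.T i - Y.toFun 0 i

/-- Time reversal `⟵X`. -/
def timeRev {α : Type*} (X : RawPath α) : RawPath α :=
  ⟨X.T, fun t i => X.toFun (X.T - t) i⟩

/-- `concatIter X n = X^{⊔(n+1)}`. -/
noncomputable def concatIter {α : Type*} (X : RawPath α) : ℕ → RawPath α
  | 0 => X
  | n + 1 => concat (concatIter X n) X

/-- `X^{⊔n}`, the `n`-fold concatenation of `X` with itself (intended for `n ≥ 1`). -/
noncomputable def concatPow {α : Type*} (X : RawPath α) (n : ℕ) : RawPath α :=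
  concatIter X (n - 1)

/-- `concatFold f k = f 0 ⊔ f 1 ⊔ ⋯ ⊔ f k`. -/
noncomputable def concatFold {α : Type*} (f : ℕ → RawPath α) : ℕ → RawPath α
  | 0 => f 0
  | k + 1 => concat (concatFold f k) (f (k + 1))

/-- The deconcatenation coproduct `Δ : T(ℝ^d) → T(ℝ^d) ⊗ T(ℝ^d)`,
`Δw = Σ_{w=uv} u ⊗ v`. -/
noncomputable def deconc {α : Type*} (x : TA α) : TensorProduct ℝ (TA α) (TA α) :=
  x.sum fun w c => c • ∑ k ∈ Finset.range (w.length + 1),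
    (Finsupp.single (w.take k) (1 : ℝ)) ⊗ₜ[ℝ] (Finsupp.single (w.drop k) (1 : ℝ))

end PathVarieties

open MeasureTheory Set

lemma Fin.exists_mem_Ioo_castSucc_succ {β : Type*} [LinearOrder β] {n : ℕ} {τ : Fin (n + 1) → β}
    {s : β} (h0 : τ 0 < s) (hlast : s < τ (Fin.last n)) (hs : s ∉ range τ) :
    ∃ k : Fin n, s ∈ Ioo (τ k.castSucc) (τ k.succ) := by
  by_contra! h
  have hlt : ∀ j, τ j < s := by
    intro j
    induction j using Fin.induction with
    | zero => exact h0
    | succ k ih => exact (not_lt.1 fun h' => h k ⟨ih, h'⟩).lt_of_ne fun e => hs ⟨_, e⟩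
  exact (hlt (Fin.last n)).not_gt hlast

lemma ContDiffOn.intervalIntegrable_deriv {f : ℝ → ℝ} {a b : ℝ} (hf : ContDiffOn ℝ 1 f (Icc a b))
    (hab : a ≤ b) : IntervalIntegrable (deriv f) volume a b := by
  rcases hab.eq_or_lt with rfl | hab
  · exact .refl
  have hint : IntervalIntegrable (derivWithin f (Icc a b)) volume a b :=
    (hf.continuousOn_derivWithin (uniqueDiffOn_Icc hab) le_rfl).intervalIntegrable_of_Icc hab.le
  rw [intervalIntegrable_iff_integrableOn_Ioo_of_le hab.le] at hint ⊢
  exact hint.congr_fun (fun s hs => derivWithin_of_mem_nhds (Icc_mem_nhds hs.1 hs.2))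
    measurableSet_Ioo

namespace PathVarieties

variable {α : Type*}

lemma shuffles_nil_left (v : Word α) : shuffles [] v = [v] := by
  simp [shuffles]

lemma shuffles_nil_right (u : Word α) : shuffles u [] = [u] := by
  cases u <;> simp [shuffles]

lemma shuffles_perm_comm : ∀ u v : Word α, (shuffles u v).Perm (shuffles v u)
  | [], v => by rw [shuffles_nil_right, shuffles_nil_left]
  | a :: u, [] => by rw [shuffles_nil_right, shuffles_nil_left]
  | a :: u, b :: v => by
      rw [shuffles, shuffles]
      exact (((shuffles_perm_comm u (b :: v)).map _).append
        ((shuffles_perm_comm (a :: u) v).map _)).trans List.perm_append_comm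
termination_by u v => u.length + v.length
decreasing_by all_goals (simp only [List.length_cons]; omega)

/-- `shuffles` is defined by first letters; this is the recursion by last letters. -/
lemma coe_shuffles_append_singleton (a b : α) : ∀ u v : Word α,
    (shuffles (u ++ [a]) (v ++ [b]) : Multiset (Word α)) =
      Multiset.map (· ++ [a]) (shuffles u (v ++ [b])) +
      Multiset.map (· ++ [b]) (shuffles (u ++ [a]) v)
  | [], [] => by
      simp only [List.nil_append, shuffles, List.map_cons, List.map_nil, List.cons_append,
        Multiset.coe_singleton, Multiset.map_singleton, Multiset.singleton_add]
      exact Multiset.cons_swap [a, b] [b, a] 0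
  | [], c :: v => by
      have IH := coe_shuffles_append_singleton a b [] v
      simp only [List.nil_append, List.cons_append, shuffles, ← Multiset.map_coe,
        ← Multiset.coe_add] at IH ⊢
      simp only [IH, Multiset.map_add, Multiset.map_map, Function.comp_def,
        Multiset.coe_singleton, Multiset.map_singleton, List.cons_append, List.append_assoc]
      abel
  | c :: u, [] => by
      have IH := coe_shuffles_append_singleton a b u []
      simp only [List.nil_append, List.cons_append, shuffles, shuffles_nil_right,
        ← Multiset.map_coe, ← Multiset.coe_add] at IH ⊢
      simp only [IH, Multiset.map_add, Multiset.map_map, Function.comp_def,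
        Multiset.coe_singleton, Multiset.map_singleton, List.cons_append, List.append_assoc]
      abel
  | c :: u, d :: v => by
      have IH1 := coe_shuffles_append_singleton a b u (d :: v)
      have IH2 := coe_shuffles_append_singleton a b (c :: u) v
      simp only [List.cons_append, shuffles, ← Multiset.map_coe, ← Multiset.coe_add] at IH1 IH2 ⊢
      simp only [IH1, IH2, Multiset.map_add, Multiset.map_map, Function.comp_def, List.cons_append]
      abel
termination_by u v => u.length + v.length
decreasing_by all_goals (simp only [List.length_cons]; omega)

noncomputable def appendLetter (b : α) : TA α →ₗ[ℝ] TA α :=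
  Finsupp.lmapDomain ℝ ℝ (· ++ [b])

lemma shw_eq_sum_coe (u v : Word α) :
    shw u v = ((shuffles u v : Multiset (Word α)).map fun w => Finsupp.single w (1 : ℝ)).sum := by
  rw [Multiset.map_coe, Multiset.sum_coe, shw]

lemma shw_comm (u v : Word α) : shw u v = shw v u :=
  ((shuffles_perm_comm u v).map _).sum_eq

lemma appendLetter_sum_single (b : α) (s : Multiset (Word α)) :
    appendLetter b (s.map fun w => Finsupp.single w (1 : ℝ)).sum =
      (s.map fun w => Finsupp.single (w ++ [b]) (1 : ℝ)).sum := by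
  simp [appendLetter, map_multiset_sum, Multiset.map_map, Function.comp_def]

lemma shw_append_singleton (a b : α) (u v : Word α) :
    shw (u ++ [a]) (v ++ [b]) =
      appendLetter a (shw u (v ++ [b])) + appendLetter b (shw (u ++ [a]) v) := by
  simp only [shw_eq_sum_coe, coe_shuffles_append_singleton, Multiset.map_add, Multiset.sum_add,
    appendLetter_sum_single, Multiset.map_map, Function.comp_def]

lemma rshw_append_singleton (u v : Word α) (b : α) :
    rshw u (v ++ [b]) = appendLetter b (shw u v) := by
  rw [shw_eq_sum_coe, appendLetter_sum_single, Multiset.map_coe, Multiset.sum_coe, rshw]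
  simp

lemma rshw_add_rshw {u v : Word α} (hu : u ≠ []) (hv : v ≠ []) :
    rshw u v + rshw v u = shw u v := by
  obtain ⟨p, a, rfl⟩ := List.eq_nil_or_concat u |>.resolve_left hu
  obtain ⟨q, b, rfl⟩ := List.eq_nil_or_concat v |>.resolve_left hv
  simp only [List.concat_eq_append]
  rw [rshw_append_singleton, rshw_append_singleton, shw_append_singleton, shw_comm (q ++ [b]),
    add_comm]

lemma rsh_eq_sum_rsh_single (x y : TA α) :
    rsh x y = y.sum fun v cv => rsh x (Finsupp.single v cv) := by
  simp only [rsh]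
  rw [Finsupp.sum_comm]
  refine Finsupp.sum_congr fun v _ => ?_
  simp only [Finsupp.sum_single_index, mul_zero, zero_smul]

lemma rsh_single_append_singleton (x : TA α) (q : Word α) (b : α) (c : ℝ) :
    rsh x (Finsupp.single (q ++ [b]) c) = c • appendLetter b (sh x (Finsupp.single q 1)) := by
  simp [rsh, sh, rshw_append_singleton, map_finsuppSum, Finsupp.smul_sum, smul_smul, mul_comm]

lemma rsh_add_rsh {x y : TA α} (hx : x [] = 0) (hy : y [] = 0) : rsh x y + rsh y x = sh x y := by
  simp only [rsh, sh]
  rw [Finsupp.sum_comm y, ← Finsupp.sum_add]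
  refine Finsupp.sum_congr fun u hu => ?_
  rw [← Finsupp.sum_add]
  refine Finsupp.sum_congr fun v hv => ?_
  have hu : u ≠ [] := by rintro rfl; exact Finsupp.mem_support_iff.1 hu hx
  have hv : v ≠ [] := by rintro rfl; exact Finsupp.mem_support_iff.1 hv hy
  rw [mul_comm (y v), ← smul_add, rshw_add_rshw hu hv]

lemma sigUpTo_nil (X : RawPath α) (t : ℝ) : sigUpTo X t [] = 1 := rfl

lemma sigUpTo_append_singleton (X : RawPath α) (t : ℝ) (w : Word α) (i : α) :
    sigUpTo X t (w ++ [i]) = ∫ s in (0 : ℝ)..t, sigUpTo X s w * deriv (fun u => X.toFun u i) s := by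
  simp [sigUpTo, sigRev]

lemma sigUpTo_zero_of_ne_nil (X : RawPath α) {w : Word α} (hw : w ≠ []) : sigUpTo X 0 w = 0 := by
  obtain ⟨p, a, rfl⟩ := List.eq_nil_or_concat w |>.resolve_left hw
  rw [List.concat_eq_append, sigUpTo_append_singleton, intervalIntegral.integral_same]

/-- `⟨σ(X)ₜ, ·⟩`: the signature of `X` stopped at time `t`, paired with `T(ℝ^d)`. -/
noncomputable def sigPairing (X : RawPath α) (t : ℝ) : TA α →ₗ[ℝ] ℝ :=
  Finsupp.linearCombination ℝ (sigUpTo X t)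

lemma sigPairing_zero_time (X : RawPath α) (x : TA α) : sigPairing X 0 x = x [] := by
  induction x using Finsupp.induction_linear with
  | zero => simp
  | add x y hx hy => simp [hx, hy]
  | single w c =>
    rcases eq_or_ne w [] with rfl | hw
    · simp [sigPairing, sigUpTo_nil]
    · simp [sigPairing, sigUpTo_zero_of_ne_nil X hw, hw.symm]

structure RawPath.HasRegularDeriv (X : RawPath α) (S : Set ℝ) : Prop where
  countable : S.Countable
  intervalIntegrable_deriv (i : α) : IntervalIntegrable (deriv fun t => X.toFun t i) volume 0 X.T
  continuousAt_deriv (i : α) : ∀ s ∈ Ioo 0 X.T \ S, ContinuousAt (deriv fun t => X.toFun t i) s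

namespace RawPath.HasRegularDeriv

variable {X : RawPath α} {S : Set ℝ}

lemma intervalIntegrable_mul_deriv (hX : X.HasRegularDeriv S) (i : α) {g : ℝ → ℝ}
    (hg : ContinuousOn g (Icc 0 X.T)) {t : ℝ} (ht : t ∈ Icc 0 X.T) :
    IntervalIntegrable (fun s => g s * deriv (fun u => X.toFun u i) s) volume 0 t := by
  have hT : 0 ≤ X.T := ht.1.trans ht.2
  rw [← uIcc_of_le hT] at hg ht
  exact ((hX.intervalIntegrable_deriv i).continuousOn_mul hg).mono_set
    (uIcc_subset_uIcc left_mem_uIcc ht)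

lemma continuousOn_sigUpTo (hX : X.HasRegularDeriv S) (w : Word α) :
    ContinuousOn (fun t => sigUpTo X t w) (Icc 0 X.T) := by
  induction w using List.reverseRecOn with
  | nil => exact continuousOn_const
  | append_singleton w i ih =>
    intro t ht
    have hT : 0 ≤ X.T := ht.1.trans ht.2
    simp_rw [sigUpTo_append_singleton]
    rw [← uIcc_of_le hT] at ht ⊢
    exact intervalIntegral.continuousOn_primitive_interval'
      (hX.intervalIntegrable_mul_deriv i ih (right_mem_Icc.2 hT)) left_mem_uIcc t ht

lemma hasDerivAt_sigUpTo_append_singleton (hX : X.HasRegularDeriv S) (w : Word α) (i : α)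
    {s : ℝ} (hs : s ∈ Ioo 0 X.T \ S) :
    HasDerivAt (fun t => sigUpTo X t (w ++ [i]))
      (sigUpTo X s w * deriv (fun u => X.toFun u i) s) s := by
  have hcont := hX.continuousOn_sigUpTo w
  have hIoo : Ioo 0 X.T ∈ nhds s := Ioo_mem_nhds hs.1.1 hs.1.2
  simp_rw [sigUpTo_append_singleton]
  refine intervalIntegral.integral_hasDerivAt_right
    (hX.intervalIntegrable_mul_deriv i hcont (Ioo_subset_Icc_self hs.1))
    ⟨Ioo 0 X.T, hIoo, ((hcont.mono Ioo_subset_Icc_self).aestronglyMeasurable measurableSet_Ioo).mul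
      (measurable_deriv _).aestronglyMeasurable⟩ ?_
  exact ((hcont.mono Ioo_subset_Icc_self).continuousAt hIoo).mul (hX.continuousAt_deriv i s hs)

/-- The product rule for iterated integrals, in integrated form. -/
lemma sigUpTo_append_mul_sigUpTo_append (hX : X.HasRegularDeriv S) (p q : Word α) (a b : α)
    {t : ℝ} (ht : t ∈ Icc 0 X.T) :
    sigUpTo X t (p ++ [a]) * sigUpTo X t (q ++ [b]) =
      (∫ s in (0 : ℝ)..t, sigUpTo X s p * sigUpTo X s (q ++ [b]) * deriv (fun u => X.toFun u a) s)
        + ∫ s in (0 : ℝ)..t,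
            sigUpTo X s (p ++ [a]) * sigUpTo X s q * deriv (fun u => X.toFun u b) s := by
  have hcont := hX.continuousOn_sigUpTo
  have hA : IntervalIntegrable (fun s =>
      sigUpTo X s p * sigUpTo X s (q ++ [b]) * deriv (fun u => X.toFun u a) s) volume 0 t :=
    hX.intervalIntegrable_mul_deriv a ((hcont p).mul (hcont _)) ht
  have hB : IntervalIntegrable (fun s =>
      sigUpTo X s (p ++ [a]) * sigUpTo X s q * deriv (fun u => X.toFun u b) s) volume 0 t :=
    hX.intervalIntegrable_mul_deriv b ((hcont _).mul (hcont q)) ht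
  rw [← intervalIntegral.integral_add hA hB, integral_eq_of_hasDerivAt_off_countable_of_le _ _
    ht.1 hX.countable (((hcont (p ++ [a])).mul (hcont (q ++ [b]))).mono
      (Icc_subset_Icc_right ht.2)) ?_ (hA.add hB)]
  · simp [sigUpTo_zero_of_ne_nil]
  · intro s hs
    have hs' : s ∈ Ioo 0 X.T \ S := ⟨⟨hs.1.1, hs.1.2.trans_le ht.2⟩, hs.2⟩
    exact ((hX.hasDerivAt_sigUpTo_append_singleton p a hs').mul
      (hX.hasDerivAt_sigUpTo_append_singleton q b hs')).congr_deriv (by ring)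

lemma continuousOn_sigPairing (hX : X.HasRegularDeriv S) (x : TA α) :
    ContinuousOn (fun t => sigPairing X t x) (Icc 0 X.T) := by
  simp only [sigPairing, Finsupp.linearCombination_apply, Finsupp.sum]
  exact continuousOn_finsetSum _ fun w _ => (hX.continuousOn_sigUpTo w).const_smul (x w)

lemma sigPairing_appendLetter (hX : X.HasRegularDeriv S) (b : α) {t : ℝ} (ht : t ∈ Icc 0 X.T)
    (z : TA α) :
    sigPairing X t (appendLetter b z) =
      ∫ s in (0 : ℝ)..t, sigPairing X s z * deriv (fun u => X.toFun u b) s := by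
  induction z using Finsupp.induction_linear with
  | zero => simp
  | add x y hx hy =>
    simp only [map_add, hx, hy, add_mul]
    exact (intervalIntegral.integral_add
      (hX.intervalIntegrable_mul_deriv b (hX.continuousOn_sigPairing x) ht)
      (hX.intervalIntegrable_mul_deriv b (hX.continuousOn_sigPairing y) ht)).symm
  | single w c =>
    simp only [appendLetter, Finsupp.lmapDomain_apply, Finsupp.mapDomain_single, sigPairing,
      Finsupp.linearCombination_single, smul_eq_mul, sigUpTo_append_singleton, mul_assoc,
      intervalIntegral.integral_const_mul]

lemma sigPairing_shw (hX : X.HasRegularDeriv S) {t : ℝ} (ht : t ∈ Icc 0 X.T) (u v : Word α) :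
    sigPairing X t (shw u v) = sigUpTo X t u * sigUpTo X t v := by
  rcases List.eq_nil_or_concat u with rfl | ⟨p, a, rfl⟩
  · simp [shw, shuffles_nil_left, sigPairing, sigUpTo_nil]
  rcases List.eq_nil_or_concat v with rfl | ⟨q, b, rfl⟩
  · simp [shw, shuffles_nil_right, sigPairing, sigUpTo_nil]
  simp only [List.concat_eq_append]
  rw [hX.sigUpTo_append_mul_sigUpTo_append p q a b ht, shw_append_singleton, map_add,
    hX.sigPairing_appendLetter a ht, hX.sigPairing_appendLetter b ht]
  have hsub : uIcc 0 t ⊆ Icc 0 X.T := by rw [uIcc_of_le ht.1]; exact Icc_subset_Icc_right ht.2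
  congr 1 <;> refine intervalIntegral.integral_congr fun s hs => ?_
  · rw [hX.sigPairing_shw (hsub hs) p (q ++ [b])]
  · rw [hX.sigPairing_shw (hsub hs) (p ++ [a]) q]
termination_by u.length + v.length

lemma sigPairing_sh (hX : X.HasRegularDeriv S) {t : ℝ} (ht : t ∈ Icc 0 X.T) (x y : TA α) :
    sigPairing X t (sh x y) = sigPairing X t x * sigPairing X t y := by
  simp only [sh, map_finsuppSum, map_smul, smul_eq_mul, hX.sigPairing_shw ht]
  simp only [sigPairing, Finsupp.linearCombination_apply, smul_eq_mul, Finsupp.sum_mul]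
  simp only [Finsupp.mul_sum]
  exact Finsupp.sum_congr fun u _ => Finsupp.sum_congr fun v _ => by ring

lemma sigPairing_rsh_eq_zero (hX : X.HasRegularDeriv S) (hT : 0 ≤ X.T) {x y : TA α}
    (hx : ∀ s ∈ Icc 0 X.T, sigPairing X s x = 0) (hy : y [] = 0) :
    sigPairing X X.T (rsh x y) = 0 := by
  rw [rsh_eq_sum_rsh_single, map_finsuppSum]
  refine Finset.sum_eq_zero fun v hv => ?_
  dsimp only
  have hv : v ≠ [] := by rintro rfl; exact Finsupp.mem_support_iff.1 hv hy
  obtain ⟨q, b, rfl⟩ := List.eq_nil_or_concat v |>.resolve_left hv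
  rw [List.concat_eq_append, rsh_single_append_singleton, map_smul,
    hX.sigPairing_appendLetter b (right_mem_Icc.2 hT), smul_eq_mul, mul_eq_zero]
  refine Or.inr ((intervalIntegral.integral_congr fun s hs => ?_).trans
    intervalIntegral.integral_zero)
  rw [uIcc_of_le hT] at hs
  simp [hX.sigPairing_sh hs, hx s hs]

end RawPath.HasRegularDeriv

lemma IsPath.exists_hasRegularDeriv {X : RawPath α} (hX : IsPath X) :
    ∃ S, X.HasRegularDeriv S := by
  obtain ⟨-, -, n, τ, hmono, h0, hlast, hC1⟩ := hX
  refine ⟨range τ, (finite_range τ).countable, fun i => ?_, fun i s hs => ?_⟩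
  · have hle : ∀ j : Fin (n + 1),
        IntervalIntegrable (deriv fun t => X.toFun t i) volume 0 (τ j) := by
      intro j
      induction j using Fin.induction with
      | zero => exact h0 ▸ .refl
      | succ k ih =>
        exact ih.trans (ContDiffOn.intervalIntegrable_deriv (hC1 k i) (hmono k.castSucc_lt_succ).le)
    exact hlast ▸ hle (Fin.last n)
  · obtain ⟨k, hk⟩ := Fin.exists_mem_Ioo_castSucc_succ (h0 ▸ hs.1.1) (hlast ▸ hs.1.2) hs.2
    exact (((hC1 k i).mono Ioo_subset_Icc_self).continuousOn_deriv_of_isOpen isOpen_Ioo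
      le_rfl).continuousAt (Ioo_mem_nhds hk.1 hk.2)

lemma mem_Idl_iff {M : Set (RawPath α)} {x : TA α} :
    x ∈ Idl M ↔ ∀ X ∈ M, sigPairing X X.T x = 0 := by
  simp only [Idl, Submodule.mem_iInf, LinearMap.mem_ker]
  rfl

lemma apply_nil_eq_zero_of_forall_Ioc {X : RawPath α} {S : Set ℝ} (hX : X.HasRegularDeriv S)
    (hT : 0 < X.T) {x : TA α} (h : ∀ t ∈ Ioc 0 X.T, sigPairing X t x = 0) : x [] = 0 := by
  have heq : EqOn (fun t => sigPairing X t x) 0 (Icc 0 X.T) :=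
    EqOn.of_subset_closure h (hX.continuousOn_sigPairing x) continuousOn_const Ioc_subset_Icc_self
      (by rw [closure_Ioc hT.ne])
  rw [← sigPairing_zero_time X x]
  exact heq (left_mem_Icc.2 hT.le)

/-- If a nonempty set `M` of paths contains all left subpaths of its
members, then `ℐ(M) ⊆ T^{≥1}(ℝ^d)` and `ℐ(M)` is a `≻`-ideal. -/
theorem statement7 {d : ℕ} (M : Set (RawPath (Fin d))) (hne : M.Nonempty)
    (hpath : ∀ X ∈ M, IsPath X)
    (hsub : ∀ X ∈ M, ∀ t : ℝ, 0 < t → t ≤ X.T →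
      (⟨t, X.toFun⟩ : RawPath (Fin d)) ∈ M) :
    (∀ x ∈ Idl M, x [] = 0) ∧
    (∀ x ∈ Idl M, ∀ y : TA (Fin d), y [] = 0 →
      rsh x y ∈ Idl M ∧ rsh y x ∈ Idl M) := by
  have hIoc : ∀ x ∈ Idl M, ∀ X ∈ M, ∀ t ∈ Ioc 0 X.T, sigPairing X t x = 0 :=
    fun x hx X hX t ht => mem_Idl_iff.1 hx _ (hsub X hX t ht.1 ht.2)
  have hnil : ∀ x ∈ Idl M, x [] = 0 := by
    obtain ⟨X, hX⟩ := hne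
    obtain ⟨S, hXS⟩ := (hpath X hX).exists_hasRegularDeriv
    exact fun x hx => apply_nil_eq_zero_of_forall_Ioc hXS (hpath X hX).1 (hIoc x hx X hX)
  have hIcc : ∀ x ∈ Idl M, ∀ X ∈ M, ∀ t ∈ Icc 0 X.T, sigPairing X t x = 0 := by
    intro x hx X hX t ht
    rcases ht.1.eq_or_lt with rfl | ht0
    · rw [sigPairing_zero_time, hnil x hx]
    · exact hIoc x hx X hX t ⟨ht0, ht.2⟩
  refine ⟨hnil, fun x hx y hy => ?_⟩
  have hxy : rsh x y ∈ Idl M := mem_Idl_iff.2 fun X hX => by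
    obtain ⟨S, hXS⟩ := (hpath X hX).exists_hasRegularDeriv
    exact hXS.sigPairing_rsh_eq_zero (hpath X hX).1.le (hIcc x hx X hX) hy
  refine ⟨hxy, ?_⟩
  rw [← add_sub_cancel_left (rsh x y) (rsh y x), rsh_add_rsh (hnil x hx) hy]
  refine (Idl M).sub_mem (mem_Idl_iff.2 fun X hX => ?_) hxy
  obtain ⟨S, hXS⟩ := (hpath X hX).exists_hasRegularDeriv
  rw [hXS.sigPairing_sh (right_mem_Icc.2 (hpath X hX).1.le), mem_Idl_iff.1 hx X hX, zero_mul]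

end PathVarieties
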